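/- arXiv:1309.7064 — 6 statements merged into one kernel-verified Lean document; each statement's English description precedes it below -/
import Mathlib

section
/- Let P and Q be polytopes in ℚ^n such that P ∪ Q is also a polytope (i.e., convex). Then the Minkowski sum (P ∪ Q) + (P ∩ Q) equals P + Q. -/
/-!
Take `p ∈ P` and `q ∈ Q`. The segment `[p, q]` lies in the convex set `P ∪ Q`, so the parameters
`t ∈ [0, 1]` of its points in `P` and in `Q` form two intervals covering `[0, 1]`, the first
containing `0` and the second `1`. Over `ℚ` such intervals may still miss each other (think of
`[0, √2)` and `(√2, 1]`); what rules this out is that the slice of a polytope by an affine subspace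
is again a polytope, so both intervals are convex hulls of finite sets and contain their endpoints.
A common parameter `t` gives `p + q = ((1 - t) p + t q) + ((1 - t) q + t p)` with the first point
in `P ∩ Q` and the second on `[q, p] ⊆ P ∪ Q`.

A slice by one hyperplane `g = c` is spanned by the vertices on it and by the points where the
segments between vertices on opposite sides cross it; slices by affine subspaces are iterated
hyperplane slices.
-/

open Finset AffineMap Pointwise

theorem Finset.sum_sum_smul_add_smul {ι κ R M : Type*} [Semiring R] [AddCommMonoid M]
    [Module R M] (s : Finset ι) (t : Finset κ) (a : ι → R) (b : κ → R) (u : ι → M) (v : κ → M) :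
    ∑ i ∈ s, ∑ j ∈ t, (b j • u i + a i • v j) =
      (∑ j ∈ t, b j) • ∑ i ∈ s, u i + (∑ i ∈ s, a i) • ∑ j ∈ t, v j := by
  rw [sum_smul_sum, sum_smul_sum, sum_comm (s := t), ← sum_add_distrib]
  exact sum_congr rfl fun _ _ ↦ sum_add_distrib

theorem Finset.sum_filter_lt_add_sum_filter_le {ι α M : Type*} [LinearOrder α]
    [AddCommMonoid M] (s : Finset ι) (f : ι → α) (c : α) (F : ι → M) :
    ∑ i ∈ s with f i < c, F i + ∑ i ∈ s with c ≤ f i, F i = ∑ i ∈ s, F i := by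
  simpa only [not_lt] using sum_filter_add_sum_filter_not s (f · < c) F

theorem Set.union_add_inter_subset_add {M : Type*} [AddCommMagma M] (P Q : Set M) :
    (P ∪ Q) + (P ∩ Q) ⊆ P + Q := by
  rintro _ ⟨a, ha | ha, b, hb, rfl⟩ <;> dsimp only
  · exact Set.add_mem_add ha hb.2
  · exact add_comm b a ▸ Set.add_mem_add hb.1 ha

section Field

variable {𝕜 E : Type*} [Field 𝕜] [AddCommGroup E] [Module 𝕜 E]

theorem Submodule.exists_finset_dual_forall_apply_eq_zero_iff [FiniteDimensional 𝕜 E]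
    (W : Submodule 𝕜 E) : ∃ G : Finset (Module.Dual 𝕜 E), ∀ v, v ∈ W ↔ ∀ g ∈ G, g v = 0 := by
  obtain ⟨G, hG⟩ := IsNoetherian.noetherian W.dualAnnihilator
  refine ⟨G, fun v ↦ ?_⟩
  rw [← Subspace.forall_mem_dualAnnihilator_apply_eq_zero_iff, ← hG]
  refine ⟨fun h g hg ↦ h g (subset_span hg), fun h g hg ↦ ?_⟩
  exact (span_le (p := LinearMap.ker (Module.Dual.eval 𝕜 E v))).mpr (fun g hg ↦ h g hg) hg

/-- The point where the line through `a` and `b` meets the level set `g = c` (junk if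
`g a = g b`). -/
def levelCrossing (g : E →ₗ[𝕜] 𝕜) (c : 𝕜) (a b : E) : E :=
  (g b - g a)⁻¹ • ((g b - c) • a + (c - g a) • b)

theorem map_levelCrossing {g : E →ₗ[𝕜] 𝕜} {a b : E} (c : 𝕜) (h : g a ≠ g b) :
    g (levelCrossing g c a b) = c := by
  have : g b - g a ≠ 0 := sub_ne_zero.mpr h.symm
  simp only [levelCrossing, map_smul, map_add, smul_eq_mul]
  field_simp
  ring

variable [LinearOrder 𝕜] [IsStrictOrderedRing 𝕜]

theorem levelCrossing_mem_segment {g : E →ₗ[𝕜] 𝕜} {c : 𝕜} {a b : E} (ha : g a < c)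
    (hb : c ≤ g b) : levelCrossing g c a b ∈ segment 𝕜 a b := by
  have hpos : 0 < g b - g a := by linarith
  refine ⟨(g b - g a)⁻¹ * (g b - c), (g b - g a)⁻¹ * (c - g a), by positivity, by positivity,
    by field_simp; ring, ?_⟩
  simp only [levelCrossing, smul_add, smul_smul]

theorem add_mem_convexHull_image2_levelCrossing {N Z : Finset E} {g : E →ₗ[𝕜] 𝕜} {c : 𝕜}
    {w : E → 𝕜} (hN : ∀ i ∈ N, g i < c) (hZ : ∀ j ∈ Z, c ≤ g j) (hwN : ∀ i ∈ N, 0 ≤ w i)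
    (hwZ : ∀ j ∈ Z, 0 ≤ w j) (hw1 : ∑ i ∈ N, w i + ∑ j ∈ Z, w j = 1)
    (hbal : ∑ i ∈ N, w i * (c - g i) = ∑ j ∈ Z, w j * (g j - c))
    (hpos : 0 < ∑ j ∈ Z, w j * (g j - c)) :
    ∑ i ∈ N, w i • i + ∑ j ∈ Z, w j • j ∈
      convexHull 𝕜 (Set.image2 (levelCrossing g c) ↑N ↑Z) := by
  set D := ∑ j ∈ Z, w j * (g j - c)
  set a : E → 𝕜 := fun i ↦ w i * (c - g i)
  set b : E → 𝕜 := fun j ↦ w j * (g j - c)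
  -- the barycentre is recombined from the crossings `levelCrossing g c i j`, with weights
  -- proportional to `w i * w j * (g j - g i)`
  set lam : E × E → 𝕜 := fun p ↦ D⁻¹ * (b p.2 * w p.1 + a p.1 * w p.2)
  have hterm : ∀ p ∈ N ×ˢ Z, lam p • levelCrossing g c p.1 p.2 =
      D⁻¹ • (b p.2 • (w p.1 • p.1) + a p.1 • (w p.2 • p.2)) := by
    rintro ⟨i, j⟩ hp
    obtain ⟨hi, hj⟩ := mem_product.mp hp
    have hij : g j - g i ≠ 0 := (sub_pos.mpr ((hN i hi).trans_le (hZ j hj))).ne'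
    simp only [lam, a, b, levelCrossing]
    match_scalars <;> field_simp <;> ring
  have hlam1 : ∑ p ∈ N ×ˢ Z, lam p = 1 := calc
    ∑ p ∈ N ×ˢ Z, lam p = D⁻¹ * ∑ i ∈ N, ∑ j ∈ Z, (b j • w i + a i • w j) := by
      simp only [sum_product, mul_sum, lam, smul_eq_mul]
    _ = D⁻¹ * (D * ∑ i ∈ N, w i + D * ∑ j ∈ Z, w j) := by
      rw [sum_sum_smul_add_smul, hbal, smul_eq_mul, smul_eq_mul]
    _ = 1 := by rw [← mul_add, hw1, mul_one, inv_mul_cancel₀ hpos.ne']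
  have hlamx : ∑ p ∈ N ×ˢ Z, lam p • levelCrossing g c p.1 p.2 =
      ∑ i ∈ N, w i • i + ∑ j ∈ Z, w j • j := calc
    _ = ∑ p ∈ N ×ˢ Z, D⁻¹ • (b p.2 • (w p.1 • p.1) + a p.1 • (w p.2 • p.2)) :=
      sum_congr rfl hterm
    _ = D⁻¹ • ∑ i ∈ N, ∑ j ∈ Z, (b j • (w i • i) + a i • (w j • j)) := by
      simp only [sum_product, smul_sum]
    _ = D⁻¹ • (D • ∑ i ∈ N, w i • i + D • ∑ j ∈ Z, w j • j) := by
      rw [sum_sum_smul_add_smul, hbal]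
    _ = _ := by rw [← smul_add, smul_smul, inv_mul_cancel₀ hpos.ne', one_smul]
  rw [← hlamx]
  refine (convex_convexHull 𝕜 _).sum_mem (fun p hp ↦ ?_) hlam1 fun p hp ↦ ?_
  · obtain ⟨hi, hj⟩ := mem_product.mp hp
    exact mul_nonneg (inv_nonneg.mpr hpos.le) (add_nonneg
      (mul_nonneg (mul_nonneg (hwZ _ hj) (sub_nonneg.mpr (hZ _ hj))) (hwN _ hi))
      (mul_nonneg (mul_nonneg (hwN _ hi) (sub_nonneg.mpr (hN _ hi).le)) (hwZ _ hj)))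
  · obtain ⟨hi, hj⟩ := mem_product.mp hp
    exact subset_convexHull 𝕜 _ (Set.mem_image2_of_mem hi hj)

theorem sum_smul_mem_convexHull_of_weight_ne_zero {s : Finset E} {T : Set E} {w : E → 𝕜}
    (hw0 : ∀ v ∈ s, 0 ≤ w v) (hw1 : ∑ v ∈ s, w v = 1) (hT : ∀ v ∈ s, w v ≠ 0 → v ∈ T) :
    ∑ v ∈ s, w v • v ∈ convexHull 𝕜 T := by
  classical
  rw [← sum_filter_of_ne (p := (· ∈ T)) fun v hv h ↦ hT v hv (left_ne_zero_of_smul h)]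
  refine (convex_convexHull 𝕜 T).sum_mem (fun v hv ↦ hw0 v (mem_filter.mp hv).1) ?_
    fun v hv ↦ subset_convexHull 𝕜 T (mem_filter.mp hv).2
  rwa [sum_filter_of_ne fun v hv h ↦ hT v hv h]

open Classical in
noncomputable def sliceVertices (s : Finset E) (g : E →ₗ[𝕜] 𝕜) (c : 𝕜) : Finset E :=
  s.filter (g · = c) ∪ image₂ (levelCrossing g c) (s.filter (g · < c)) (s.filter (c ≤ g ·))

theorem coe_sliceVertices_subset (s : Finset E) (g : E →ₗ[𝕜] 𝕜) (c : 𝕜) :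
    ↑(sliceVertices s g c) ⊆ convexHull 𝕜 ↑s ∩ {x | g x = c} := by
  intro x hx
  simp only [sliceVertices, coe_union, coe_image₂, coe_filter, Set.mem_union, Set.mem_image2,
    Set.mem_ofPred_eq] at hx
  rcases hx with ⟨hxs, hx⟩ | ⟨a, ⟨has, ha⟩, b, ⟨hbs, hb⟩, rfl⟩
  · exact ⟨subset_convexHull 𝕜 _ hxs, hx⟩
  · exact ⟨segment_subset_convexHull has hbs (levelCrossing_mem_segment ha hb),
      map_levelCrossing c (by linarith)⟩

theorem convexHull_inter_subset_sliceVertices (s : Finset E) (g : E →ₗ[𝕜] 𝕜) (c : 𝕜) :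
    convexHull 𝕜 ↑s ∩ {x | g x = c} ⊆ convexHull 𝕜 ↑(sliceVertices s g c) := by
  classical
  rintro x ⟨hx, hgx : g x = c⟩
  obtain ⟨w, hw0, hw1, rfl⟩ := Finset.mem_convexHull'.mp hx
  set N := s.filter (g · < c)
  set Z := s.filter (c ≤ g ·)
  have hN : ∀ i ∈ N, 0 ≤ w i * (c - g i) := fun i hi ↦
    mul_nonneg (hw0 i (mem_filter.mp hi).1) (sub_nonneg.mpr (mem_filter.mp hi).2.le)
  have hZ : ∀ j ∈ Z, 0 ≤ w j * (g j - c) := fun j hj ↦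
    mul_nonneg (hw0 j (mem_filter.mp hj).1) (sub_nonneg.mpr (mem_filter.mp hj).2)
  have hbal : ∑ i ∈ N, w i * (c - g i) = ∑ j ∈ Z, w j * (g j - c) := by
    have hsum : ∑ v ∈ s, w v * (g v - c) = 0 := calc
      _ = g (∑ v ∈ s, w v • v) - (∑ v ∈ s, w v) * c := by
        simp [map_sum, mul_sub, sum_sub_distrib, sum_mul]
      _ = 0 := by rw [hgx, hw1, one_mul, sub_self]
    rw [← sum_filter_lt_add_sum_filter_le s g c] at hsum
    have hneg : ∑ i ∈ N, w i * (c - g i) = -∑ i ∈ N, w i * (g i - c) := by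
      rw [← sum_neg_distrib]; exact sum_congr rfl fun _ _ ↦ by ring
    linear_combination hneg - hsum
  rcases (sum_nonneg hZ).eq_or_lt with hD0 | hDpos
  · -- all the weight sits on vertices at level `c`
    refine sum_smul_mem_convexHull_of_weight_ne_zero hw0 hw1 fun v hv hwv ↦
      mem_coe.mpr (mem_union_left _ (mem_filter.mpr ⟨hv, ?_⟩))
    by_cases hvc : g v < c
    · have := (sum_eq_zero_iff_of_nonneg hN).mp (hbal.trans hD0.symm) v (mem_filter.mpr ⟨hv, hvc⟩)
      exact absurd this (mul_ne_zero hwv (sub_ne_zero.mpr hvc.ne'))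
    · have := (sum_eq_zero_iff_of_nonneg hZ).mp hD0.symm v (mem_filter.mpr ⟨hv, not_lt.mp hvc⟩)
      exact sub_eq_zero.mp ((mul_eq_zero.mp this).resolve_left hwv)
  · rw [← sum_filter_lt_add_sum_filter_le s g c]
    refine convexHull_mono ?_ (add_mem_convexHull_image2_levelCrossing
      (fun i hi ↦ (mem_filter.mp hi).2) (fun j hj ↦ (mem_filter.mp hj).2)
      (fun i hi ↦ hw0 i (mem_filter.mp hi).1) (fun j hj ↦ hw0 j (mem_filter.mp hj).1)
      ((sum_filter_lt_add_sum_filter_le s g c w).trans hw1) hbal hDpos)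
    simp only [sliceVertices, coe_union, coe_image₂]
    exact Set.subset_union_right

theorem convexHull_sliceVertices (s : Finset E) (g : E →ₗ[𝕜] 𝕜) (c : 𝕜) :
    convexHull 𝕜 ↑(sliceVertices s g c) = convexHull 𝕜 ↑s ∩ {x | g x = c} :=
  (convexHull_min (coe_sliceVertices_subset s g c)
    ((convex_convexHull 𝕜 _).inter (convex_hyperplane g.isLinear c))).antisymm
    (convexHull_inter_subset_sliceVertices s g c)

theorem exists_finset_convexHull_eq_inter_hyperplanes (s : Finset E)
    (G : Finset (Module.Dual 𝕜 E)) (p : E) :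
    ∃ t : Finset E, convexHull 𝕜 ↑t = convexHull 𝕜 ↑s ∩ {x | ∀ g ∈ G, g x = g p} := by
  classical
  induction G using Finset.induction_on with
  | empty => exact ⟨s, by simp⟩
  | insert g G _ ih =>
    obtain ⟨t, ht⟩ := ih
    refine ⟨sliceVertices t g (g p), ?_⟩
    rw [convexHull_sliceVertices, ht]
    ext x
    simp only [Set.mem_inter_iff, Set.mem_ofPred_eq, mem_insert, forall_eq_or_imp]
    tauto

theorem Finset.isGreatest_convexHull {A : Finset 𝕜} (hA : A.Nonempty) :
    IsGreatest (convexHull 𝕜 ↑A) (A.max' hA) :=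
  ⟨subset_convexHull 𝕜 _ (A.max'_mem hA), convexHull_min (fun a ha ↦ A.le_max' a ha) (convex_Iic _)⟩

theorem Finset.isLeast_convexHull {A : Finset 𝕜} (hA : A.Nonempty) :
    IsLeast (convexHull 𝕜 ↑A) (A.min' hA) :=
  ⟨subset_convexHull 𝕜 _ (A.min'_mem hA), convexHull_min (fun a ha ↦ A.min'_le a ha) (convex_Ici _)⟩

theorem exists_mem_Icc_inter_of_Icc_subset_union {S T : Set 𝕜} (hS : S.OrdConnected)
    (hT : T.OrdConnected) {a b u v : 𝕜} (ha : IsGreatest S a) (hb : IsLeast T b) (hu : u ∈ S)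
    (hv : v ∈ T) (huv : u ≤ v) (hcover : Set.Icc u v ⊆ S ∪ T) :
    ∃ t ∈ Set.Icc u v, t ∈ S ∩ T := by
  rcases le_or_gt b a with hba | hab
  · have hbv : b ≤ v := hb.2 hv
    exact ⟨max u b, ⟨le_max_left _ _, max_le huv hbv⟩,
      hS.out hu ha.1 ⟨le_max_left _ _, max_le (ha.2 hu) hba⟩,
      hT.out hb.1 hv ⟨le_max_right _ _, max_le huv hbv⟩⟩
  · -- otherwise the midpoint of the gap `(a, b)` lies in neither set
    have hmid : (a + b) / 2 ∈ Set.Icc u v := ⟨by linarith [ha.2 hu], by linarith [hb.2 hv]⟩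
    rcases hcover hmid with h | h
    · linarith [ha.2 h]
    · linarith [hb.2 h]

variable [FiniteDimensional 𝕜 E]

theorem exists_finset_preimage_convexHull {F : Type*} [AddCommGroup F] [Module 𝕜 F]
    {φ : F →ᵃ[𝕜] E} (hφ : Function.Injective φ) (s : Finset E) :
    ∃ t : Finset F, φ ⁻¹' convexHull 𝕜 ↑s = convexHull 𝕜 ↑t := by
  obtain ⟨G, hG⟩ := (LinearMap.range φ.linear).exists_finset_dual_forall_apply_eq_zero_iff
  have hrange : Set.range φ = {x | ∀ g ∈ G, g x = g (φ 0)} := by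
    ext x
    have hlin : ∀ y, φ.linear y = φ y - φ 0 := fun y ↦ congrFun φ.decomp' y
    calc x ∈ Set.range φ ↔ x - φ 0 ∈ LinearMap.range φ.linear := by
          simp only [Set.mem_range, LinearMap.mem_range, hlin, sub_left_inj]
      _ ↔ ∀ g ∈ G, g x = g (φ 0) := by simp only [hG, map_sub, sub_eq_zero]
  obtain ⟨u, hu⟩ := exists_finset_convexHull_eq_inter_hyperplanes s G (φ 0)
  rw [← hrange] at hu
  have hu_range : ↑u ⊆ Set.range φ :=
    (subset_convexHull 𝕜 _).trans (hu ▸ Set.inter_subset_right)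
  refine ⟨u.preimage φ hφ.injOn, ?_⟩
  rw [coe_preimage, ← hφ.preimage_image (convexHull 𝕜 _), φ.image_convexHull,
    Set.image_preimage_eq_of_subset hu_range, hu, Set.preimage_inter_range]

theorem exists_lineMap_mem_inter_of_segment_subset_union {s s' : Finset E} {p q : E}
    (hp : p ∈ convexHull 𝕜 ↑s) (hq : q ∈ convexHull 𝕜 ↑s')
    (hpq : segment 𝕜 p q ⊆ convexHull 𝕜 ↑s ∪ convexHull 𝕜 ↑s') :
    ∃ t ∈ Set.Icc (0 : 𝕜) 1, lineMap p q t ∈ convexHull 𝕜 ↑s ∩ convexHull 𝕜 ↑s' := by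
  rcases eq_or_ne p q with rfl | hne
  · exact ⟨0, Set.left_mem_Icc.mpr zero_le_one, by simpa using ⟨hp, hq⟩⟩
  obtain ⟨A, hA⟩ := exists_finset_preimage_convexHull (lineMap_injective 𝕜 hne) s
  obtain ⟨B, hB⟩ := exists_finset_preimage_convexHull (lineMap_injective 𝕜 hne) s'
  have h0 : (0 : 𝕜) ∈ convexHull 𝕜 ↑A := by rw [← hA]; simpa using hp
  have h1 : (1 : 𝕜) ∈ convexHull 𝕜 ↑B := by rw [← hB]; simpa using hq
  have hAne : A.Nonempty := coe_nonempty.mp (convexHull_nonempty_iff.mp ⟨0, h0⟩)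
  have hBne : B.Nonempty := coe_nonempty.mp (convexHull_nonempty_iff.mp ⟨1, h1⟩)
  have hcover : Set.Icc 0 1 ⊆ convexHull 𝕜 (A : Set 𝕜) ∪ convexHull 𝕜 (B : Set 𝕜) := fun t ht ↦ by
    rw [← hA, ← hB]; exact hpq (lineMap_mem_segment 𝕜 p q ht)
  obtain ⟨t, ht, htA, htB⟩ := exists_mem_Icc_inter_of_Icc_subset_union
    (convex_convexHull 𝕜 _).ordConnected (convex_convexHull 𝕜 _).ordConnected
    (isGreatest_convexHull hAne) (isLeast_convexHull hBne) h0 h1 zero_le_one hcover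
  exact ⟨t, ht, by rwa [← hA] at htA, by rwa [← hB] at htB⟩

theorem add_subset_union_add_inter_of_convex_union {s s' : Finset E}
    (h : Convex 𝕜 (convexHull 𝕜 (s : Set E) ∪ convexHull 𝕜 ↑s')) :
    convexHull 𝕜 (s : Set E) + convexHull 𝕜 (s' : Set E) ⊆
      (convexHull 𝕜 ↑s ∪ convexHull 𝕜 ↑s') + (convexHull 𝕜 ↑s ∩ convexHull 𝕜 ↑s') := by
  rintro _ ⟨p, hp, q, hq, rfl⟩
  obtain ⟨t, ht, hpq⟩ :=
    exists_lineMap_mem_inter_of_segment_subset_union hp hq (h.segment_subset (.inl hp) (.inr hq))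
  refine ⟨lineMap q p t, h.segment_subset (.inr hq) (.inl hp) (lineMap_mem_segment 𝕜 q p ht),
    lineMap p q t, hpq, ?_⟩
  simp only [lineMap_apply_module]
  module

end Field

/-- If `P` and `Q` are polytopes in `ℚ^n` (convex hulls of finite sets)
whose union is also a polytope, then `(P ∪ Q) + (P ∩ Q) = P + Q` (Minkowski sum). -/
theorem union_add_inter_eq_add_of_polytopes {n : ℕ} (P Q : Set (Fin n → ℚ))
    (hP : ∃ s : Finset (Fin n → ℚ), P = convexHull ℚ (s : Set (Fin n → ℚ)))
    (hQ : ∃ s : Finset (Fin n → ℚ), Q = convexHull ℚ (s : Set (Fin n → ℚ)))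
    (hU : ∃ s : Finset (Fin n → ℚ), P ∪ Q = convexHull ℚ (s : Set (Fin n → ℚ))) :
    (P ∪ Q) + (P ∩ Q) = P + Q := by
  obtain ⟨s, rfl⟩ := hP
  obtain ⟨s', rfl⟩ := hQ
  obtain ⟨u, hu⟩ := hU
  exact (Set.union_add_inter_subset_add _ _).antisymm
    (add_subset_union_add_inter_of_convex_union (hu ▸ convex_convexHull ℚ _))
end

section
/- Let P and Q be nonempty compact convex sets in ℝ^n whose union is convex. Then the support function of P ∩ Q equals the pointwise minimum of the support functions of P and Q: for all x, h_{P∩Q}(x) = min(h_P(x), h_Q(x)). -/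
/-!
Maximise `⟪x, ·⟫` over `P` at `p` and over `Q` at `q`. The segment `[p, q]` lies in the convex set
`P ∪ Q`, and being connected it cannot be split by the two closed sets `P` and `Q`, so it meets
`P ∩ Q` at some `z`. A linear functional is at least `min ⟪x, p⟫ ⟪x, q⟫` on `[p, q]`, hence
`h_{P ∩ Q}(x) ≥ ⟪x, z⟫ ≥ min (h_P x) (h_Q x)`; the reverse inequality is monotonicity.
-/

open RealInnerProductSpace

/-- The support function of a set `K ⊆ ℝ^n`: `h_K(x) = sup {⟪x, v⟫ : v ∈ K}`. -/
noncomputable def supportFn {n : ℕ} (K : Set (EuclideanSpace ℝ (Fin n)))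
    (x : EuclideanSpace ℝ (Fin n)) : ℝ :=
  sSup ((fun v => ⟪x, v⟫) '' K)

theorem segment_inter_nonempty_of_subset_union {E : Type*} [AddCommGroup E] [Module ℝ E]
    [TopologicalSpace E] [IsTopologicalAddGroup E] [ContinuousSMul ℝ E] {P Q : Set E}
    (hP : IsClosed P) (hQ : IsClosed Q) {p q : E} (hp : p ∈ P) (hq : q ∈ Q)
    (h : segment ℝ p q ⊆ P ∪ Q) : (segment ℝ p q ∩ (P ∩ Q)).Nonempty :=
  isPreconnected_closed_iff.1 (convex_segment p q).isPreconnected P Q hP hQ h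
    ⟨p, left_mem_segment ℝ p q, hp⟩ ⟨q, right_mem_segment ℝ p q, hq⟩

theorem min_inner_le_inner_of_mem_segment {F : Type*} [NormedAddCommGroup F]
    [InnerProductSpace ℝ F] (x : F) {p q z : F} (hz : z ∈ segment ℝ p q) :
    min ⟪x, p⟫ ⟪x, q⟫ ≤ ⟪x, z⟫ :=
  ((innerSL ℝ x).toLinearMap.concaveOn convex_univ).min_le_of_mem_segment trivial trivial hz

section SupportFn

variable {n : ℕ} {K : Set (EuclideanSpace ℝ (Fin n))} {x p v : EuclideanSpace ℝ (Fin n)}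

theorem supportFn_eq_of_isMaxOn (hp : p ∈ K) (hmax : IsMaxOn (⟪x, ·⟫) K p) :
    supportFn K x = ⟪x, p⟫ :=
  IsGreatest.csSup_eq ⟨Set.mem_image_of_mem _ hp, Set.forall_mem_image.2 fun _ hv => hmax hv⟩

theorem supportFn_le (hK : K.Nonempty) {c : ℝ} (h : ∀ v ∈ K, ⟪x, v⟫ ≤ c) :
    supportFn K x ≤ c :=
  csSup_le (hK.image _) (Set.forall_mem_image.2 h)

theorem le_supportFn (hK : BddAbove ((⟪x, ·⟫) '' K)) (hv : v ∈ K) :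
    ⟪x, v⟫ ≤ supportFn K x :=
  le_csSup hK (Set.mem_image_of_mem _ hv)

end SupportFn

theorem supportFn_inter_eq_min_general {n : ℕ} (P Q : Set (EuclideanSpace ℝ (Fin n)))
    (hPc : IsCompact P) (hQc : IsCompact Q)
    (hPne : P.Nonempty) (hQne : Q.Nonempty) (hU : Convex ℝ (P ∪ Q)) :
    ∀ x : EuclideanSpace ℝ (Fin n),
      supportFn (P ∩ Q) x = min (supportFn P x) (supportFn Q x) := by
  intro x
  have hcont : Continuous (⟪x, ·⟫) := continuous_const.inner continuous_id
  obtain ⟨p, hpP, hpmax⟩ := hPc.exists_isMaxOn hPne hcont.continuousOn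
  obtain ⟨q, hqQ, hqmax⟩ := hQc.exists_isMaxOn hQne hcont.continuousOn
  obtain ⟨z, hz, hzPQ⟩ := segment_inter_nonempty_of_subset_union hPc.isClosed hQc.isClosed
    hpP hqQ (hU.segment_subset (Or.inl hpP) (Or.inr hqQ))
  rw [supportFn_eq_of_isMaxOn hpP hpmax, supportFn_eq_of_isMaxOn hqQ hqmax]
  refine le_antisymm (supportFn_le ⟨z, hzPQ⟩ fun v hv => le_min (hpmax hv.1) (hqmax hv.2)) ?_
  have hbdd : BddAbove ((⟪x, ·⟫) '' (P ∩ Q)) :=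
    ⟨⟪x, p⟫, Set.forall_mem_image.2 fun _ hv => hpmax hv.1⟩
  calc min ⟪x, p⟫ ⟪x, q⟫ ≤ ⟪x, z⟫ := min_inner_le_inner_of_mem_segment x hz
    _ ≤ supportFn (P ∩ Q) x := le_supportFn hbdd hzPQ

/-- For nonempty compact convex `P, Q ⊆ ℝ^n` with `P ∪ Q` convex,
`h_{P ∩ Q}(x) = min (h_P(x)) (h_Q(x))` for all `x`. -/
theorem supportFn_inter_eq_min {n : ℕ} (P Q : Set (EuclideanSpace ℝ (Fin n)))
    (hPc : IsCompact P) (hQc : IsCompact Q) (hPv : Convex ℝ P) (hQv : Convex ℝ Q)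
    (hPne : P.Nonempty) (hQne : Q.Nonempty) (hU : Convex ℝ (P ∪ Q)) :
    ∀ x : EuclideanSpace ℝ (Fin n),
      supportFn (P ∩ Q) x = min (supportFn P x) (supportFn Q x) :=
  supportFn_inter_eq_min_general P Q hPc hQc hPne hQne hU
end

section
/- Let P and Q be nonempty compact convex sets in ℝ^n whose union is convex. Then h_{P∪Q}(x) + h_{P∩Q}(x) = h_P(x) + h_Q(x) for all x ∈ ℝ^n, i.e., max(h_P(x), h_Q(x)) + min(h_P(x), h_Q(x)) = h_P(x) + h_Q(x) and h_{P∪Q} = max(h_P, h_Q). -/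
open RealInnerProductSpace

/-!
`h_{P∪Q} = max (h_P, h_Q)` holds for any two nonempty bounded sets. For the intersection, let
`p ∈ P` and `q ∈ Q` maximise `⟪x, ·⟫`. The segment `[p, q]` lies in `P ∪ Q` and is connected,
so the closed sets `P` and `Q`, which both meet it, cannot be disjoint on it: some `z ∈ [p, q]`
lies in `P ∩ Q`, and `⟪x, z⟫ ≥ min (⟪x, p⟫, ⟪x, q⟫)` gives `h_{P∩Q} ≥ min (h_P, h_Q)`.
-/

theorem exists_mem_inter_of_segment_subset_union {E : Type*} [TopologicalSpace E]
    [AddCommGroup E] [Module ℝ E] [ContinuousAdd E] [ContinuousSMul ℝ E] {P Q : Set E}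
    (hP : IsClosed P) (hQ : IsClosed Q) {p q : E} (hp : p ∈ P) (hq : q ∈ Q)
    (hseg : segment ℝ p q ⊆ P ∪ Q) : ∃ z ∈ segment ℝ p q, z ∈ P ∩ Q :=
  isPreconnected_closed_iff.mp (convex_segment p q).isPreconnected P Q hP hQ hseg
    ⟨p, left_mem_segment ℝ p q, hp⟩ ⟨q, right_mem_segment ℝ p q, hq⟩

section

variable {n : ℕ} {P Q K : Set (EuclideanSpace ℝ (Fin n))} (x : EuclideanSpace ℝ (Fin n))

theorem bddAbove_image_inner (hK : Bornology.IsBounded K) :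
    BddAbove ((fun v => ⟪x, v⟫) '' K) :=
  ((innerSL ℝ x).lipschitz.isBounded_image hK).bddAbove

theorem inner_le_supportFn (hK : Bornology.IsBounded K) {v : EuclideanSpace ℝ (Fin n)}
    (hv : v ∈ K) : ⟪x, v⟫ ≤ supportFn K x :=
  le_csSup (bddAbove_image_inner x hK) ⟨v, hv, rfl⟩

theorem supportFn_mono (hQ : Bornology.IsBounded Q) (hP : P.Nonempty) (hPQ : P ⊆ Q) :
    supportFn P x ≤ supportFn Q x :=
  csSup_le_csSup (bddAbove_image_inner x hQ) (hP.image _) (Set.image_mono hPQ)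

theorem exists_supportFn_eq_inner (hK : IsCompact K) (hne : K.Nonempty) :
    ∃ v ∈ K, supportFn K x = ⟪x, v⟫ :=
  hK.exists_sSup_image_eq hne (continuous_const.inner continuous_id).continuousOn

theorem supportFn_union (hP : Bornology.IsBounded P) (hQ : Bornology.IsBounded Q)
    (hPne : P.Nonempty) (hQne : Q.Nonempty) :
    supportFn (P ∪ Q) x = max (supportFn P x) (supportFn Q x) := by
  rw [supportFn, Set.image_union, csSup_union (bddAbove_image_inner x hP) (hPne.image _)
    (bddAbove_image_inner x hQ) (hQne.image _)]
  rfl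

theorem supportFn_inter (hPc : IsCompact P) (hQc : IsCompact Q) (hPne : P.Nonempty)
    (hQne : Q.Nonempty) (hU : Convex ℝ (P ∪ Q)) :
    supportFn (P ∩ Q) x = min (supportFn P x) (supportFn Q x) := by
  obtain ⟨p, hpP, hp⟩ := exists_supportFn_eq_inner x hPc hPne
  obtain ⟨q, hqQ, hq⟩ := exists_supportFn_eq_inner x hQc hQne
  obtain ⟨z, hz, hzPQ⟩ := exists_mem_inter_of_segment_subset_union hPc.isClosed hQc.isClosed
    hpP hqQ (hU.segment_subset (Or.inl hpP) (Or.inr hqQ))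
  have hPQne : (P ∩ Q).Nonempty := ⟨z, hzPQ⟩
  refine le_antisymm (le_min (supportFn_mono x hPc.isBounded hPQne Set.inter_subset_left)
    (supportFn_mono x hQc.isBounded hPQne Set.inter_subset_right)) ?_
  calc min (supportFn P x) (supportFn Q x) = min ⟪x, p⟫ ⟪x, q⟫ := by rw [hp, hq]
    _ ≤ ⟪x, z⟫ := ((innerₛₗ ℝ x).concaveOn convex_univ).ge_on_segment trivial trivial hz
    _ ≤ supportFn (P ∩ Q) x :=
      inner_le_supportFn x (hPc.isBounded.subset Set.inter_subset_left) hzPQ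

end

theorem supportFn_union_add_inter_general {n : ℕ} (P Q : Set (EuclideanSpace ℝ (Fin n)))
    (hPc : IsCompact P) (hQc : IsCompact Q)
    (hPne : P.Nonempty) (hQne : Q.Nonempty) (hU : Convex ℝ (P ∪ Q)) :
    ∀ x : EuclideanSpace ℝ (Fin n),
      supportFn (P ∪ Q) x = max (supportFn P x) (supportFn Q x) ∧
      max (supportFn P x) (supportFn Q x) + min (supportFn P x) (supportFn Q x)
        = supportFn P x + supportFn Q x ∧
      supportFn (P ∪ Q) x + supportFn (P ∩ Q) x = supportFn P x + supportFn Q x := by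
  intro x
  have hunion := supportFn_union x hPc.isBounded hQc.isBounded hPne hQne
  have hinter := supportFn_inter x hPc hQc hPne hQne hU
  exact ⟨hunion, max_add_min _ _, by rw [hunion, hinter, max_add_min]⟩

/-- For nonempty compact convex `P, Q ⊆ ℝ^n` with `P ∪ Q` convex,
`h_{P∪Q} = max (h_P, h_Q)` and `h_{P∪Q}(x) + h_{P∩Q}(x) = h_P(x) + h_Q(x)` for all `x`. -/
theorem supportFn_union_add_inter {n : ℕ} (P Q : Set (EuclideanSpace ℝ (Fin n)))
    (hPc : IsCompact P) (hQc : IsCompact Q) (hPv : Convex ℝ P) (hQv : Convex ℝ Q)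
    (hPne : P.Nonempty) (hQne : Q.Nonempty) (hU : Convex ℝ (P ∪ Q)) :
    ∀ x : EuclideanSpace ℝ (Fin n),
      supportFn (P ∪ Q) x = max (supportFn P x) (supportFn Q x) ∧
      max (supportFn P x) (supportFn Q x) + min (supportFn P x) (supportFn Q x)
        = supportFn P x + supportFn Q x ∧
      supportFn (P ∪ Q) x + supportFn (P ∩ Q) x = supportFn P x + supportFn Q x :=
  supportFn_union_add_inter_general P Q hPc hQc hPne hQne hU
end

section
/- Let N be an abelian group and let A, B, C be subgroups of N such that all the index expressions below are finite. Then [N : A+C]·[N : B+(A∩C)] = [N : A+B]·[N : (A∩B)+C]. -/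
/-! By the second isomorphism theorem, `[N : X] = [A : A ∩ X] · [N : A + X]`. For
`X = B + (A ∩ C)` and `X = (A ∩ B) + C` the modular law gives `A ∩ X = (A ∩ B) + (A ∩ C)` in both
cases, while `A + X` is `A + B`, resp. `A + C`; so both sides equal
`[A : (A ∩ B) + (A ∩ C)] · [N : A + B] · [N : A + C]`. -/

namespace Subgroup

variable {G : Type*} [Group G]

@[to_additive index_eq_relIndex_inf_mul_index_sup]
theorem index_eq_relIndex_inf_mul_index_sup (H K : Subgroup G) [K.Normal] :
    K.index = (H ⊓ K).relIndex H * (H ⊔ K).index := by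
  rw [inf_relIndex_left, ← relIndex_sup_right, relIndex_mul_index le_sup_right]

end Subgroup

open AddSubgroup in
theorem index_product_identity_general {N : Type*} [AddCommGroup N] (A B C : AddSubgroup N) :
    (A ⊔ C).index * (B ⊔ (A ⊓ C)).index = (A ⊔ B).index * ((A ⊓ B) ⊔ C).index := by
  have hinf₁ : A ⊓ (B ⊔ (A ⊓ C)) = (A ⊓ B) ⊔ (A ⊓ C) :=
    (inf_sup_assoc_of_le B inf_le_left).symm
  have hinf₂ : A ⊓ ((A ⊓ B) ⊔ C) = (A ⊓ B) ⊔ (A ⊓ C) := by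
    rw [inf_comm, sup_inf_assoc_of_le C inf_le_left, inf_comm C]
  have hsup₁ : A ⊔ (B ⊔ (A ⊓ C)) = A ⊔ B := by
    rw [← sup_assoc, sup_right_comm, sup_of_le_left (inf_le_left : A ⊓ C ≤ A)]
  have hsup₂ : A ⊔ ((A ⊓ B) ⊔ C) = A ⊔ C := by
    rw [← sup_assoc, sup_of_le_left (inf_le_left : A ⊓ B ≤ A)]
  rw [index_eq_relIndex_inf_mul_index_sup A (B ⊔ (A ⊓ C)),
    index_eq_relIndex_inf_mul_index_sup A ((A ⊓ B) ⊔ C), hinf₁, hinf₂, hsup₁, hsup₂]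
  ring

/-- For subgroups `A, B, C` of an abelian group `N` with all four indices finite,
`[N : A+C]·[N : B+(A∩C)] = [N : A+B]·[N : (A∩B)+C]`. -/
theorem index_product_identity {N : Type*} [AddCommGroup N] (A B C : AddSubgroup N)
    (h1 : (A ⊔ C).index ≠ 0) (h2 : (B ⊔ (A ⊓ C)).index ≠ 0)
    (h3 : (A ⊔ B).index ≠ 0) (h4 : ((A ⊓ B) ⊔ C).index ≠ 0) :
    (A ⊔ C).index * (B ⊔ (A ⊓ C)).index = (A ⊔ B).index * ((A ⊓ B) ⊔ C).index :=
  index_product_identity_general A B C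
end

section
/- Let k be a field, I an ideal of k[x₁,…,xₙ] with n ≥ 1, and ω ∈ ℝⁿ with ω₁ = 0. Viewing ideals in k(α)[x₁,…,xₙ] with α transcendental over k, we have in_ω(I·k(α)[x] + ⟨x₁ − α⟩) = in_ω(I·k(α)[x]) + in_ω(⟨x₁ − α⟩) = in_ω(I·k(α)[x]) + ⟨x₁ − α⟩. -/
/-!
Clearing denominators, a nonzero `f ∈ I·k(α)[x] + ⟨x₁ − α⟩` times some nonzero `c ∈ k[α]` is the
image of an `F ∈ I·k[α][x] + ⟨x₁ − α⟩`. The substitution `σ : α ↦ x₁` maps `F` into `I` and, as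
`ω₁ = 0`, creates no new `ω`-weights, so `σ(in_ω F)` is `0` or the initial form of `σ F ∈ I`; meanwhile
`in_ω F ≡ σ(in_ω F)` modulo `x₁ − α`. Multiplication by the weight-`0` homogeneous elements `c` and
`x₁ − α` commutes with `in_ω`. Hence, with `I' = I·k(α)[x]` and `J = ⟨x₁ − α⟩`,
`in_ω(I' + J) ⊆ in_ω(I') + J` and `in_ω(J) = J`.
-/
open scoped Classical

/-- The weight of an exponent vector `v` with respect to `ω ∈ ℝⁿ`. -/
noncomputable def expWeight {m : ℕ} (ω : Fin m → ℝ) (v : Fin m →₀ ℕ) : ℝ :=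
  ∑ i, (v i : ℝ) * ω i

/-- The initial form `in_ω(f)`: the sum of the terms of `f` of maximal `ω`-weight. -/
noncomputable def initialForm {m : ℕ} {R : Type*} [CommRing R] (ω : Fin m → ℝ)
    (f : MvPolynomial (Fin m) R) : MvPolynomial (Fin m) R :=
  ∑ v ∈ f.support.filter (fun v => ∀ u ∈ f.support, expWeight ω u ≤ expWeight ω v),
    MvPolynomial.monomial v (MvPolynomial.coeff v f)

/-- The initial ideal `in_ω(I)`, generated by the initial forms of nonzero elements of `I`. -/
noncomputable def initialIdeal {m : ℕ} {R : Type*} [CommRing R] (ω : Fin m → ℝ)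
    (I : Ideal (MvPolynomial (Fin m) R)) : Ideal (MvPolynomial (Fin m) R) :=
  Ideal.span {g | ∃ f ∈ I, f ≠ 0 ∧ g = initialForm ω f}

open MvPolynomial
open scoped Polynomial
open Finsupp (weight weight_apply)

section InitialForm

variable {m : ℕ} (ω : Fin m → ℝ) {R : Type*} [CommRing R]

theorem expWeight_eq_weight : expWeight ω = weight ω := by
  ext v
  simp [expWeight, weight_apply, Finsupp.sum_fintype, mul_comm]

theorem coeff_initialForm (f : MvPolynomial (Fin m) R) (v : Fin m →₀ ℕ) :
    (initialForm ω f).coeff v =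
      if ∀ u ∈ f.support, weight ω u ≤ weight ω v then f.coeff v else 0 := by
  by_cases hv : v ∈ f.support
  · simp [initialForm, coeff_sum, coeff_monomial, expWeight_eq_weight, hv]
  · simp_all [initialForm, coeff_sum, coeff_monomial]

@[simp]
theorem initialForm_zero : initialForm ω (0 : MvPolynomial (Fin m) R) = 0 := by
  simp [initialForm]

theorem initialForm_eq_weightedHomogeneousComponent {f : MvPolynomial (Fin m) R} {W : ℝ}
    (hle : ∀ u ∈ f.support, weight ω u ≤ W) (hW : ∃ u ∈ f.support, weight ω u = W) :
    initialForm ω f = weightedHomogeneousComponent ω W f := by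
  obtain ⟨u₀, hu₀, rfl⟩ := hW
  ext v
  rw [coeff_initialForm, coeff_weightedHomogeneousComponent]
  by_cases hv : weight ω v = weight ω u₀
  · rw [if_pos hv, if_pos (hv ▸ hle)]
  · rw [if_neg hv, ite_eq_right_iff]
    intro hmax
    by_contra hcoeff
    exact hv (le_antisymm (hle v (mem_support_iff.2 hcoeff)) (hmax u₀ hu₀))

theorem exists_isWeightedHomogeneous_initialForm (f : MvPolynomial (Fin m) R) :
    ∃ W, IsWeightedHomogeneous ω (initialForm ω f) W ∧
      ∀ v ∈ (f - initialForm ω f).support, weight ω v < W := by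
  rcases eq_or_ne f 0 with rfl | hf
  · exact ⟨0, by simpa using isWeightedHomogeneous_zero R ω 0⟩
  have hne := support_nonempty.2 hf
  set W := f.support.sup' hne (weight ω)
  have hle : ∀ u ∈ f.support, weight ω u ≤ W := fun u hu => Finset.le_sup' (weight ω) hu
  obtain ⟨u₀, hu₀, hW⟩ := Finset.exists_mem_eq_sup' hne (weight ω)
  rw [initialForm_eq_weightedHomogeneousComponent ω hle ⟨u₀, hu₀, hW.symm⟩]
  refine ⟨W, weightedHomogeneousComponent_isWeightedHomogeneous _ _, fun v hv => ?_⟩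
  rw [mem_support_iff, coeff_sub, coeff_weightedHomogeneousComponent] at hv
  split_ifs at hv with hvW
  · exact absurd (sub_self _) hv
  · exact lt_of_le_of_ne (hle v (mem_support_iff.2 (by simpa using hv))) hvW

theorem initialForm_ne_zero {f : MvPolynomial (Fin m) R} (hf : f ≠ 0) : initialForm ω f ≠ 0 := by
  have hne := support_nonempty.2 hf
  obtain ⟨u₀, hu₀, hW⟩ := Finset.exists_mem_eq_sup' hne (weight ω)
  have hle : ∀ u ∈ f.support, weight ω u ≤ weight ω u₀ := fun u hu =>
    hW ▸ Finset.le_sup' (weight ω) hu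
  refine ne_zero_iff.2 ⟨u₀, ?_⟩
  rwa [coeff_initialForm, if_pos hle, ← MvPolynomial.mem_support_iff]

theorem initialForm_add_eq {p q : MvPolynomial (Fin m) R} {W : ℝ}
    (hp : IsWeightedHomogeneous ω p W) (hp0 : p ≠ 0)
    (hq : ∀ v ∈ q.support, weight ω v < W) :
    initialForm ω (p + q) = p := by
  have hqW {v} (hv : weight ω v = W) : q.coeff v = 0 :=
    notMem_support_iff.1 fun hvq => (hq v hvq).ne hv
  obtain ⟨u₀, hu₀⟩ := ne_zero_iff.1 hp0
  rw [initialForm_eq_weightedHomogeneousComponent ω (W := W), map_add,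
    hp.weightedHomogeneousComponent_same, weightedHomogeneousComponent_eq_zero', add_zero]
  · exact fun v hv hvW => MvPolynomial.mem_support_iff.1 hv (hqW hvW)
  · intro u hu
    rcases Finset.mem_union.1 (support_add hu) with hu | hu
    · exact (hp (MvPolynomial.mem_support_iff.1 hu)).le
    · exact (hq u hu).le
  · refine ⟨u₀, ?_, hp hu₀⟩
    rwa [MvPolynomial.mem_support_iff, coeff_add, hqW (hp hu₀), add_zero]

theorem initialForm_of_isWeightedHomogeneous {p : MvPolynomial (Fin m) R} {W : ℝ}
    (hp : IsWeightedHomogeneous ω p W) : initialForm ω p = p := by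
  rcases eq_or_ne p 0 with rfl | hp0
  · exact initialForm_zero ω
  simpa using initialForm_add_eq ω hp hp0 (q := 0) (by simp)

theorem initialForm_mul_of_isWeightedHomogeneous [IsDomain R] {g : MvPolynomial (Fin m) R}
    {W' : ℝ} (hg : IsWeightedHomogeneous ω g W') (f : MvPolynomial (Fin m) R) :
    initialForm ω (f * g) = initialForm ω f * g := by
  rcases eq_or_ne f 0 with rfl | hf
  · simp
  rcases eq_or_ne g 0 with rfl | hg0
  · simp
  obtain ⟨W, hhom, hlow⟩ := exists_isWeightedHomogeneous_initialForm ω f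
  have hsplit : f * g = initialForm ω f * g + (f - initialForm ω f) * g := by ring
  rw [hsplit]
  refine initialForm_add_eq ω (hhom.mul hg) (mul_ne_zero (initialForm_ne_zero ω hf) hg0) ?_
  intro v hv
  obtain ⟨a, ha, b, hb, rfl⟩ := Finset.mem_add.1 (support_mul _ _ hv)
  rw [map_add, hg (MvPolynomial.mem_support_iff.1 hb)]
  exact add_lt_add_left (hlow a ha) W'

theorem initialForm_map {S : Type*} [CommRing S] {φ : R →+* S} (hφ : Function.Injective φ)
    (f : MvPolynomial (Fin m) R) :
    initialForm ω (map φ f) = map φ (initialForm ω f) := by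
  ext v
  rw [coeff_initialForm, coeff_map, coeff_map, coeff_initialForm,
    support_map_of_injective _ hφ, apply_ite φ, map_zero]

theorem initialForm_apply_addMonoidHom {S : Type*} [CommRing S]
    (φ : MvPolynomial (Fin m) R →+ MvPolynomial (Fin m) S)
    (hφ : ∀ F, ∀ v ∈ (φ F).support, ∃ u ∈ F.support, weight ω u = weight ω v)
    {F : MvPolynomial (Fin m) R} (h : φ (initialForm ω F) ≠ 0) :
    initialForm ω (φ F) = φ (initialForm ω F) := by
  obtain ⟨W, hhom, hlow⟩ := exists_isWeightedHomogeneous_initialForm ω F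
  have hsplit : φ F = φ (initialForm ω F) + φ (F - initialForm ω F) := by
    rw [← map_add, add_sub_cancel]
  rw [hsplit]
  refine initialForm_add_eq ω (W := W) (fun {v} hv => ?_) h fun v hv => ?_
  · obtain ⟨u, hu, huv⟩ := hφ _ v (MvPolynomial.mem_support_iff.2 hv)
    exact huv ▸ hhom (MvPolynomial.mem_support_iff.1 hu)
  · obtain ⟨u, hu, huv⟩ := hφ _ v hv
    exact huv ▸ hlow u hu

theorem initialForm_mem_initialIdeal {I : Ideal (MvPolynomial (Fin m) R)}
    {f : MvPolynomial (Fin m) R} (hf : f ∈ I) : initialForm ω f ∈ initialIdeal ω I := by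
  rcases eq_or_ne f 0 with rfl | hf0
  · simp
  exact Ideal.subset_span ⟨f, hf, hf0, rfl⟩

theorem initialIdeal_mono {I J : Ideal (MvPolynomial (Fin m) R)} (h : I ≤ J) :
    initialIdeal ω I ≤ initialIdeal ω J :=
  Ideal.span_mono fun _ ⟨f, hf, hf0, hg⟩ => ⟨f, h hf, hf0, hg⟩

theorem initialIdeal_span_singleton [IsDomain R] {g : MvPolynomial (Fin m) R} {W : ℝ}
    (hg : IsWeightedHomogeneous ω g W) :
    initialIdeal ω (Ideal.span {g}) = Ideal.span {g} := by
  refine le_antisymm (Ideal.span_le.2 ?_) ?_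
  · rintro _ ⟨f, hf, -, rfl⟩
    obtain ⟨h, rfl⟩ := Ideal.mem_span_singleton'.1 hf
    rw [initialForm_mul_of_isWeightedHomogeneous ω hg]
    exact Ideal.mul_mem_left _ _ (Ideal.mem_span_singleton_self g)
  · rw [Ideal.span_singleton_le_iff_mem]
    simpa only [initialForm_of_isWeightedHomogeneous ω hg] using
      initialForm_mem_initialIdeal ω (Ideal.mem_span_singleton_self g)

end InitialForm

section ClearDenominators

-- the algebra structure for which `MvPolynomial σ S` is a localization of `MvPolynomial σ R`
attribute [local instance] MvPolynomial.algebraMvPolynomial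

theorem exists_mul_C_eq_map_of_mem_map {σ R S : Type*} [CommRing R] [CommRing S] [Algebra R S]
    (M : Submonoid R) [IsLocalization M S] {A : Ideal (MvPolynomial σ R)}
    {f : MvPolynomial σ S} (hf : f ∈ A.map (map (algebraMap R S))) :
    ∃ c ∈ M, ∃ F ∈ A, f * C (algebraMap R S c) = map (algebraMap R S) F := by
  obtain ⟨⟨⟨F, hF⟩, ⟨_, c, hc, rfl⟩⟩, h⟩ :=
    (IsLocalization.mem_map_algebraMap_iff (M.map C) (MvPolynomial σ S)).1 hf
  exact ⟨c, hc, F, hF, by rw [← map_C]; exact h⟩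

end ClearDenominators

section Specialize

variable {σ R : Type*} [CommRing R] (i : σ)

/-- With `R[X]` in the role of `R[α]`, the substitution `α ↦ x_i`. -/
noncomputable def specializeToX : MvPolynomial σ R[X] →+* MvPolynomial σ R :=
  eval₂Hom (Polynomial.aeval (X i : MvPolynomial σ R)).toRingHom X

@[simp]
theorem specializeToX_C (p : R[X]) : specializeToX i (C p) = Polynomial.aeval (X i) p :=
  eval₂Hom_C _ _ _

@[simp]
theorem specializeToX_X (j : σ) : specializeToX i (X j : MvPolynomial σ R[X]) = X j :=
  eval₂Hom_X' _ _ _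

@[simp]
theorem specializeToX_map_C (q : MvPolynomial σ R) :
    specializeToX i (map Polynomial.C q) = q := by
  induction q using MvPolynomial.induction_on <;> simp_all

theorem sub_map_C_specializeToX_mem (F : MvPolynomial σ R[X]) :
    F - map Polynomial.C (specializeToX i F) ∈ Ideal.span {X i - C Polynomial.X} := by
  set J := Ideal.span {(X i - C Polynomial.X : MvPolynomial σ R[X])}
  have hXi : Ideal.Quotient.mk J (X i) = Ideal.Quotient.mk J (C Polynomial.X) :=
    Ideal.Quotient.eq.2 (Ideal.mem_span_singleton_self _)
  suffices h : (Ideal.Quotient.mk J).comp ((map Polynomial.C).comp (specializeToX i)) =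
      Ideal.Quotient.mk J by
    exact Ideal.Quotient.eq.1 (DFunLike.congr_fun h F).symm
  refine ringHom_ext (fun p => ?_) fun j => by simp
  induction p using Polynomial.induction_on <;> simp_all [map_add, map_mul, map_pow]

theorem map_sup_span_le_comap_specializeToX (I : Ideal (MvPolynomial σ R)) :
    I.map (map Polynomial.C) ⊔ Ideal.span {X i - C Polynomial.X} ≤
      I.comap (specializeToX i) := by
  refine sup_le (Ideal.map_le_iff_le_comap.2 fun q hq => ?_) ?_
  · simpa using hq
  · simp [Ideal.span_le]

variable {M : Type*} [AddCommMonoid M] {w : σ → M}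

theorem isWeightedHomogeneous_aeval_X (hw : w i = 0) (p : R[X]) :
    IsWeightedHomogeneous w (Polynomial.aeval (X i : MvPolynomial σ R) p) 0 := by
  induction p using Polynomial.induction_on' with
  | add p q hp hq => simpa using hp.add hq
  | monomial n a =>
    simpa [Polynomial.aeval_monomial, algebraMap_eq, hw] using
      ((isWeightedHomogeneous_X (R := R) w i).pow n).C_mul a

theorem isWeightedHomogeneous_specializeToX_monomial (hw : w i = 0) (u : σ →₀ ℕ) (c : R[X]) :
    IsWeightedHomogeneous w (specializeToX i (monomial u c)) (weight w u) := by
  have hprod : (u.prod fun j e => (X j : MvPolynomial σ R) ^ e) = monomial u 1 := by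
    simp [monomial_eq]
  rw [specializeToX, coe_eval₂Hom, eval₂_monomial, hprod, ← zero_add (weight w u)]
  exact (isWeightedHomogeneous_aeval_X i hw c).mul (isWeightedHomogeneous_monomial w u 1 rfl)

theorem exists_weight_eq_of_mem_support_specializeToX (hw : w i = 0) (F : MvPolynomial σ R[X]) :
    ∀ v ∈ (specializeToX i F).support, ∃ u ∈ F.support, weight w u = weight w v := by
  intro v hv
  rw [← support_sum_monomial_coeff F, map_sum] at hv
  obtain ⟨u, hu, hvu⟩ := Finset.mem_biUnion.1 (support_sum hv)
  exact ⟨u, hu, (isWeightedHomogeneous_specializeToX_monomial i hw u _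
    (MvPolynomial.mem_support_iff.1 hvu)).symm⟩

end Specialize

section Transcendental

variable {k : Type*} [Field k] {m : ℕ} (ω : Fin m → ℝ) (i : Fin m)

theorem map_algebraMap_comp_map_C :
    (map (algebraMap k[X] (RatFunc k))).comp (map Polynomial.C) =
      (map (algebraMap k (RatFunc k)) : MvPolynomial (Fin m) k →+* _) := by
  rw [IsScalarTower.algebraMap_eq k k[X] (RatFunc k), Polynomial.algebraMap_eq]
  exact RingHom.ext (map_map _ _)

theorem map_initialForm_mem_initialIdeal_sup (hω : ω i = 0) {I : Ideal (MvPolynomial (Fin m) k)}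
    {F : MvPolynomial (Fin m) k[X]}
    (hF : F ∈ I.map (map Polynomial.C) ⊔ Ideal.span {X i - C Polynomial.X}) :
    map (algebraMap k[X] (RatFunc k)) (initialForm ω F) ∈
      initialIdeal ω (I.map (map (algebraMap k (RatFunc k)))) ⊔
        Ideal.span {X i - C RatFunc.X} := by
  set G := initialForm ω F
  have hsplit : map (algebraMap k[X] (RatFunc k)) G =
      map (algebraMap k (RatFunc k)) (specializeToX i G) +
        map (algebraMap k[X] (RatFunc k)) (G - map Polynomial.C (specializeToX i G)) := by
    rw [← map_algebraMap_comp_map_C, RingHom.comp_apply, ← map_add, add_sub_cancel]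
  rw [hsplit]
  refine add_mem (Ideal.mem_sup_left ?_) (Ideal.mem_sup_right ?_)
  · rcases eq_or_ne (specializeToX i G) 0 with hσ | hσ
    · simp [hσ]
    have hin : initialForm ω (specializeToX i F) = specializeToX i G :=
      initialForm_apply_addMonoidHom ω (specializeToX i).toAddMonoidHom
        (exists_weight_eq_of_mem_support_specializeToX i hω) hσ
    rw [← hin, ← initialForm_map ω (algebraMap k (RatFunc k)).injective]
    exact initialForm_mem_initialIdeal ω
      (Ideal.mem_map_of_mem _ (map_sup_span_le_comap_specializeToX i I hF))
  · simpa [Ideal.map_span] using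
      Ideal.mem_map_of_mem (map (algebraMap k[X] (RatFunc k))) (sub_map_C_specializeToX_mem i G)

theorem initialIdeal_sup_span_le (hω : ω i = 0) (I : Ideal (MvPolynomial (Fin m) k)) :
    initialIdeal ω (I.map (map (algebraMap k (RatFunc k))) ⊔ Ideal.span {X i - C RatFunc.X}) ≤
      initialIdeal ω (I.map (map (algebraMap k (RatFunc k)))) ⊔
        Ideal.span {X i - C RatFunc.X} := by
  have hmap : I.map (map (algebraMap k (RatFunc k))) ⊔ Ideal.span {X i - C RatFunc.X} =
      (I.map (map Polynomial.C) ⊔ Ideal.span {X i - C Polynomial.X}).map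
        (map (algebraMap k[X] (RatFunc k))) := by
    simp [Ideal.map_sup, Ideal.map_map, map_algebraMap_comp_map_C, Ideal.map_span]
  refine Ideal.span_le.2 ?_
  rintro _ ⟨f, hf, -, rfl⟩
  rw [hmap] at hf
  obtain ⟨c, hc, F, hF, hcf⟩ := exists_mul_C_eq_map_of_mem_map (nonZeroDivisors k[X]) hf
  have hu : IsUnit (C (algebraMap k[X] (RatFunc k) c) : MvPolynomial (Fin m) (RatFunc k)) :=
    (IsUnit.mk0 _ (IsFractionRing.to_map_ne_zero_of_mem_nonZeroDivisors hc)).map C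
  rw [SetLike.mem_coe, ← Ideal.mul_unit_mem_iff_mem _ hu,
    ← initialForm_mul_of_isWeightedHomogeneous ω (isWeightedHomogeneous_C ω _), hcf,
    initialForm_map ω (IsFractionRing.injective k[X] (RatFunc k))]
  exact map_initialForm_mem_initialIdeal_sup ω i hω hF

end Transcendental

/-- For an ideal `I ⊆ k[x₁,…,xₙ]`, `ω ∈ ℝⁿ` with `ω₁ = 0`, and `α`
transcendental over `k`, in `k(α)[x₁,…,xₙ]` one has
`in_ω(I·k(α)[x] + ⟨x₁ − α⟩) = in_ω(I·k(α)[x]) + in_ω(⟨x₁ − α⟩) = in_ω(I·k(α)[x]) + ⟨x₁ − α⟩`. -/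
theorem initialIdeal_sum_linear {k : Type*} [Field k] {n : ℕ}
    (I : Ideal (MvPolynomial (Fin (n + 1)) k)) (ω : Fin (n + 1) → ℝ) (hω : ω 0 = 0) :
    letI K := RatFunc k
    letI I' : Ideal (MvPolynomial (Fin (n + 1)) K) :=
      I.map (MvPolynomial.map (algebraMap k K))
    letI α : MvPolynomial (Fin (n + 1)) K := MvPolynomial.C RatFunc.X
    initialIdeal ω (I' ⊔ Ideal.span {MvPolynomial.X 0 - α})
        = initialIdeal ω I' ⊔ initialIdeal ω (Ideal.span {MvPolynomial.X 0 - α}) ∧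
      initialIdeal ω I' ⊔ initialIdeal ω (Ideal.span {MvPolynomial.X 0 - α})
        = initialIdeal ω I' ⊔ Ideal.span {MvPolynomial.X 0 - α} := by
  have hX : IsWeightedHomogeneous ω (X 0 : MvPolynomial (Fin (n + 1)) (RatFunc k)) 0 :=
    hω ▸ isWeightedHomogeneous_X _ ω 0
  have hJ : initialIdeal ω (Ideal.span {X 0 - C RatFunc.X}) = Ideal.span {X 0 - C RatFunc.X} :=
    initialIdeal_span_singleton ω (hX.sub (isWeightedHomogeneous_C ω RatFunc.X))
  rw [hJ]
  exact ⟨le_antisymm (initialIdeal_sup_span_le ω 0 hω I)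
    (sup_le (initialIdeal_mono ω le_sup_left) (hJ.ge.trans (initialIdeal_mono ω le_sup_right))),
    rfl⟩
end

section
/- Let I be an ideal of k[x₁,…,xₙ] (k algebraically closed) and let J = (I : (x₁⋯xₙ)^∞) ∩ k[x₁] be the elimination ideal of the saturation. Then J ≠ {0} if and only if the image of V(I) ∩ (k*)ⁿ under projection to the first coordinate is contained in a finite subset of k*. -/
/-!
At a point `x` of `V(I) ∩ (k*)ⁿ`, the relation `p(x₀) · (x₀⋯xₙ)^m ∈ I` gives `p(x₀) = 0`, so the
first coordinates of such points are among the finitely many roots of `p ≠ 0`. Conversely, if these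
first coordinates form a finite set `S`, then `q(x₀) · x₀⋯xₙ` with `q = ∏_{y ∈ S} (X - y)` vanishes
on all of `V(I)` (the second factor takes care of the points off the torus), so by the
Nullstellensatz its `N`-th power `q^N(x₀) · (x₀⋯xₙ)^N` lies in `I`.
-/

namespace MvPolynomial

section CommRing

variable {R σ : Type*} [CommRing R]

theorem eval_polynomial_aeval_X (x : σ → R) (i : σ) (p : Polynomial R) :
    eval x (Polynomial.aeval (X i) p) = p.eval (x i) := by
  simpa using (Polynomial.aeval_algHom_apply (aeval x) (X i) p).symm

theorem eval_prod_X_eq_zero_iff [Fintype σ] [IsDomain R] {x : σ → R} :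
    eval x (∏ i, X i) = 0 ↔ ∃ i, x i = 0 := by
  simp [map_prod, Finset.prod_eq_zero_iff]

theorem finite_setOf_eval_of_polynomial_aeval_X_mul_prod_X_pow_mem [Fintype σ] [IsDomain R]
    {I : Ideal (MvPolynomial σ R)} (i : σ) {p : Polynomial R} (hp : p ≠ 0) {m : ℕ}
    (h : Polynomial.aeval (X i) p * (∏ j, X j) ^ m ∈ I) :
    {y : R | ∃ x : σ → R, (∀ f ∈ I, eval x f = 0) ∧ (∀ j, x j ≠ 0) ∧ x i = y}.Finite := by
  refine (Polynomial.finite_setOfPred_isRoot hp).subset ?_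
  rintro _ ⟨x, hxI, hx, rfl⟩
  have hpx := hxI _ h
  rw [map_mul, map_pow, eval_polynomial_aeval_X] at hpx
  have hprod : eval x (∏ j, X j) ≠ 0 := mt eval_prod_X_eq_zero_iff.1 (not_exists.2 hx)
  exact (mul_eq_zero.1 hpx).resolve_right (pow_ne_zero m hprod)

end CommRing

section IsAlgClosed

variable {k σ : Type*} [Field k] [IsAlgClosed k] [Fintype σ]

theorem exists_pow_mul_prod_X_pow_mem_of_eval_eq_zero {I : Ideal (MvPolynomial σ k)}
    {f : MvPolynomial σ k}
    (hf : ∀ x : σ → k, (∀ g ∈ I, eval x g = 0) → (∀ i, x i ≠ 0) → eval x f = 0) :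
    ∃ N : ℕ, f ^ N * (∏ i, X i) ^ N ∈ I := by
  have hvan : f * ∏ i, X i ∈ vanishingIdeal k (zeroLocus k I) := by
    refine mem_vanishingIdeal_iff.2 fun x hx ↦ ?_
    simp only [mem_zeroLocus_iff, aeval_eq_eval] at hx ⊢
    rw [map_mul]
    by_cases htorus : ∀ i, x i ≠ 0
    · rw [hf x hx htorus, zero_mul]
    · push Not at htorus
      rw [eval_prod_X_eq_zero_iff.2 htorus, mul_zero]
  rw [vanishingIdeal_zeroLocus_eq_radical] at hvan
  obtain ⟨N, hN⟩ := hvan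
  exact ⟨N, mul_pow f _ N ▸ hN⟩

theorem exists_polynomial_aeval_X_mul_prod_X_pow_mem_of_finite {I : Ideal (MvPolynomial σ k)}
    (i : σ)
    (hfin : {y : k | ∃ x : σ → k, (∀ f ∈ I, eval x f = 0) ∧ (∀ j, x j ≠ 0) ∧ x i = y}.Finite) :
    ∃ p : Polynomial k, p ≠ 0 ∧ ∃ m : ℕ, Polynomial.aeval (X i) p * (∏ j, X j) ^ m ∈ I := by
  obtain ⟨N, hN⟩ := exists_pow_mul_prod_X_pow_mem_of_eval_eq_zero (I := I)
    (f := Polynomial.aeval (X i) (Lagrange.nodal hfin.toFinset id)) fun x hxI hx ↦ by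
      rw [eval_polynomial_aeval_X]
      exact Lagrange.eval_nodal_at_node (v := id) (hfin.mem_toFinset.2 ⟨x, hxI, hx, rfl⟩)
  exact ⟨_, pow_ne_zero N Lagrange.nodal_ne_zero, N, by rwa [map_pow]⟩

end IsAlgClosed

end MvPolynomial

/-- Let `k` be algebraically closed and `I ⊆ k[x₁,…,xₙ]` an ideal.  The
elimination ideal `J = (I : (x₁⋯xₙ)^∞) ∩ k[x₁]` is nonzero if and only if the image of
`V(I) ∩ (k*)ⁿ` under projection to the first coordinate is a finite subset of `k*`. -/
theorem elimination_of_saturation_nonzero_iff {k : Type*} [Field k] [IsAlgClosed k] {n : ℕ}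
    (I : Ideal (MvPolynomial (Fin (n + 1)) k)) :
    (∃ p : Polynomial k, p ≠ 0 ∧ ∃ m : ℕ,
        Polynomial.aeval (MvPolynomial.X 0 : MvPolynomial (Fin (n + 1)) k) p *
          (∏ i, MvPolynomial.X i) ^ m ∈ I)
      ↔ Set.Finite {y : k | ∃ x : Fin (n + 1) → k,
          (∀ f ∈ I, MvPolynomial.eval x f = 0) ∧ (∀ i, x i ≠ 0) ∧ x 0 = y} :=
  ⟨fun ⟨_, hp, _, h⟩ ↦
      MvPolynomial.finite_setOf_eval_of_polynomial_aeval_X_mul_prod_X_pow_mem 0 hp h,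
    MvPolynomial.exists_polynomial_aeval_X_mul_prod_X_pow_mem_of_finite 0⟩
end
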